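/- arXiv:2311.17348 — 3 statements merged into one kernel-verified Lean document; each statement's English description precedes it below -/
import Mathlib

section
/- If a and b are distinct positive integers, then the Gaussian integers α = -a + i and β = -b + i are multiplicatively independent; that is, there are no integers u, v, not both zero, with α^u · β^v = 1. -/
open GaussianInt Zsqrtd Finset Complex

namespace IndepAux



noncomputable def cc (j : ℕ) : ℤ := ((Zsqrtd.sqrtd : GaussianInt) ^ j).im

lemma sqrtd_sq : (Zsqrtd.sqrtd : GaussianInt) ^ 2 = -1 := by
  ext <;> simp [pow_two, Zsqrtd.re_mul, Zsqrtd.im_mul]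

lemma sqrtd_pow_even (k : ℕ) : (Zsqrtd.sqrtd : GaussianInt) ^ (2*k) = (-1)^k := by
  rw [pow_mul, sqrtd_sq]

lemma cc_even (k : ℕ) : cc (2*k) = 0 := by
  unfold cc
  rw [sqrtd_pow_even]
  rcases Nat.even_or_odd k with h | h
  · rw [h.neg_one_pow]; rfl
  · rw [h.neg_one_pow]; rfl

lemma cc_odd (k : ℕ) : cc (2*k+1) = (-1)^k := by
  unfold cc
  rw [pow_succ, sqrtd_pow_even]
  rcases Nat.even_or_odd k with h | h
  · rw [h.neg_one_pow, h.neg_one_pow]; simp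
  · rw [h.neg_one_pow, h.neg_one_pow]; simp

lemma cc_sub_two {n : ℕ} (hn : 2 ≤ n) : cc (n-2) = - cc n := by
  have h : n = (n-2) + 2 := by omega
  unfold cc
  rw [h, pow_add, sqrtd_sq]
  simp

lemma cc_abs {n : ℕ} (hodd : Odd n) : cc n = 1 ∨ cc n = -1 := by
  obtain ⟨k, rfl⟩ := hodd
  rw [cc_odd]
  rcases Nat.even_or_odd k with h | h
  · left; rw [h.neg_one_pow]
  · right; rw [h.neg_one_pow]

lemma im_dvd_im_pow (γ : GaussianInt) (n : ℕ) : γ.im ∣ (γ^n).im := by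
  induction n with
  | zero => simp [Zsqrtd.im_one]
  | succ n ih =>
    rw [pow_succ, Zsqrtd.im_mul]
    exact dvd_add (Dvd.dvd.mul_left dvd_rfl _) (Dvd.dvd.mul_right ih _)

lemma decompose (g h : ℤ) : (⟨g, h⟩ : GaussianInt) = (g : GaussianInt) + (h : GaussianInt) * Zsqrtd.sqrtd := by
  ext <;> simp [Zsqrtd.re_mul, Zsqrtd.im_mul, Zsqrtd.re_intCast, Zsqrtd.im_intCast]

noncomputable def imHom : GaussianInt →+ ℤ where
  toFun := Zsqrtd.im
  map_zero' := rfl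
  map_add' _ _ := rfl

lemma im_pow_sum (g h : ℤ) (n : ℕ) :
    (((⟨g, h⟩ : GaussianInt)) ^ n).im
      = ∑ j ∈ range (n+1), g ^ j * h ^ (n - j) * (n.choose j : ℤ) * cc (n - j) := by
  rw [decompose, add_pow]
  have : ∀ z : GaussianInt, z.im = imHom z := fun _ => rfl
  rw [this, map_sum]
  refine Finset.sum_congr rfl fun j hj => ?_
  show ((g:GaussianInt)^j * ((h:GaussianInt)*Zsqrtd.sqrtd)^(n-j) * ((n.choose j : ℕ) : GaussianInt)).im = _
  rw [mul_pow]
  simp only [cc, Zsqrtd.im_mul, Zsqrtd.re_mul, ← Int.cast_pow, ← Nat.cast_pow,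
    Zsqrtd.re_intCast, Zsqrtd.im_intCast, Zsqrtd.re_natCast, Zsqrtd.im_natCast]
  ring



lemma key_dvd (n k G : ℕ) (hk : 2 ≤ k) (hkn : 2*k ≤ n) (hG : G ≠ 0) (hG2 : 2 ∣ G) :
    2 ^ (padicValNat 2 (n.choose 2 * G^2) + 1) ∣ n.choose (2*k) * G^(2*k) := by
  have hn2 : 2 ≤ n := by omega
  have hc2 : n.choose 2 ≠ 0 := (Nat.choose_pos hn2).ne'
  have hc2k : n.choose (2*k) ≠ 0 := (Nat.choose_pos hkn).ne'
  set a := padicValNat 2 (n.choose 2) with ha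
  set t := padicValNat 2 G with ht
  set s := padicValNat 2 k with hs
  set b := padicValNat 2 (n.choose (2*k)) with hb
  have hval : padicValNat 2 (n.choose 2 * G^2) = a + 2*t := by
    rw [padicValNat.mul hc2 (pow_ne_zero _ hG), padicValNat.pow]
  have ht1 : 1 ≤ t := one_le_padicValNat_of_dvd hG hG2
  have hsk : s + 1 ≤ k := by
    have h1 : 2^s ≤ k := Nat.le_of_dvd (by omega) pow_padicValNat_dvd
    have h2 : s < 2^s := Nat.lt_two_pow_self
    omega
  -- choose identity
  have hid : n.choose (2*k) * ((2*k).choose 2) = n.choose 2 * (n-2).choose (2*k-2) :=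
    Nat.choose_mul (by omega)
  have hck : (2*k).choose 2 = k * (2*k-1) := by
    rw [Nat.choose_two_right]
    have : 2*k*(2*k-1) = (k*(2*k-1))*2 := by ring
    rw [this, Nat.mul_div_cancel _ (by omega)]
  have hvck : padicValNat 2 (k*(2*k-1)) = s := by
    rw [padicValNat.mul (by omega) (by omega),
      padicValNat.eq_zero_of_not_dvd (p:=2) (n:= 2*k-1) (by omega)]
    omega
  have hab : a ≤ b + s := by
    have hx := congrArg (padicValNat 2) hid
    rw [hck, padicValNat.mul hc2k (Nat.mul_ne_zero (by omega) (by omega)),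
      padicValNat.mul hc2 (Nat.choose_pos (by omega) : 0 < (n-2).choose (2*k-2)).ne',
      hvck] at hx
    omega
  have hfin : a + 2*t + 1 ≤ b + 2*k*t := by nlinarith
  calc (2:ℕ) ^ (padicValNat 2 (n.choose 2 * G^2) + 1)
      ∣ 2 ^ (b + 2*k*t) := by rw [hval]; exact pow_dvd_pow 2 (by omega)
    _ ∣ n.choose (2*k) * G^(2*k) := by
        rw [pow_add]
        exact mul_dvd_mul pow_padicValNat_dvd
          (by rw [show 2*k*t = t*(2*k) by ring, pow_mul]; exact pow_dvd_pow_of_dvd pow_padicValNat_dvd _)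

-- assume previous: cc, cc_even, cc_odd, cc_sub_two, cc_abs, im_pow_sum, key_dvd
lemma key (n : ℕ) (g h : ℤ) (hodd : Odd n) (h3 : 3 ≤ n) (hh : h^2 = 1)
    (hg2 : (2:ℤ) ∣ g) (hg0 : g ≠ 0) :
    (((⟨g, h⟩ : GaussianInt)) ^ n).im.natAbs ≠ 1 := by
  intro hcon
  rw [im_pow_sum] at hcon
  set f : ℕ → ℤ := fun j => g ^ j * (n.choose j : ℤ) * cc (n - j) with hf
  have hsum : ∑ j ∈ range (n+1), g ^ j * h ^ (n - j) * (n.choose j : ℤ) * cc (n - j)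
      = h * ∑ j ∈ range (n+1), f j := by
    rw [Finset.mul_sum]
    refine Finset.sum_congr rfl fun j hj => ?_
    rcases Nat.even_or_odd (n - j) with ⟨k, hk⟩ | ⟨k, hk⟩
    · rw [hf]; simp only
      rw [show n - j = 2*k by omega, cc_even]
      ring
    · rw [hf]; simp only
      rw [hk, pow_add, pow_mul, hh, one_pow, pow_one]
      ring
  rw [hsum, Int.natAbs_mul] at hcon
  have hh1 : h.natAbs = 1 := by
    rcases Int.isUnit_iff.mp (IsUnit.of_mul_eq_one h (by nlinarith [hh] : h * h = 1)) with h1 | h1 <;> simp [h1]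
  rw [hh1, one_mul] at hcon
  set S := ∑ j ∈ range (n+1), f j with hS
  -- split off j = 0 and j = 2
  have h0 : (0:ℕ) ∈ range (n+1) := by simp
  have h2 : (2:ℕ) ∈ (range (n+1)).erase 0 := by
    simp [Finset.mem_erase]; omega
  set R := ∑ j ∈ ((range (n+1)).erase 0).erase 2, f j with hR
  have hsplit : S = f 0 + (f 2 + R) := by
    rw [hS, ← Finset.add_sum_erase _ f h0, ← Finset.add_sum_erase _ f h2]
  set ε := cc n with hε
  have hf0 : f 0 = ε := by simp [hf]; rfl
  have hf2 : f 2 = -ε * (g^2 * (n.choose 2 : ℤ)) := by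
    rw [hf]; simp only
    rw [cc_sub_two (by omega)]
    ring
  have hεpm : ε = 1 ∨ ε = -1 := cc_abs hodd
  set G := g.natAbs with hG
  have hGg : (G:ℤ)^2 = g^2 := Int.natAbs_sq g
  have hG0 : G ≠ 0 := Int.natAbs_ne_zero.mpr hg0
  have hG2 : 2 ∣ G := by
    have := Int.natAbs_dvd_natAbs.mpr hg2; simpa using this
  set v := padicValNat 2 (n.choose 2 * G^2) with hv
  -- divisibility of R
  have hRdvd : ∀ j ∈ ((range (n+1)).erase 0).erase 2, ((2:ℤ)^(v+1) ∣ f j) ∧ ((4:ℤ) ∣ f j) := by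
    intro j hj
    simp only [Finset.mem_erase, Finset.mem_range] at hj
    obtain ⟨hj2, hj0, hjn⟩ := hj
    rcases Nat.even_or_odd j with ⟨k, hk⟩ | ⟨k, hk⟩
    · -- j even, so j = 2k with k ≥ 2
      have hk2 : 2 ≤ k := by omega
      have hkn : 2*k ≤ n := by omega
      have hccpm : cc (n - j) = 1 ∨ cc (n - j) = -1 := by
        apply cc_abs
        rcases hodd with ⟨m, hm⟩
        exact ⟨m - k, by omega⟩
      have hnat := key_dvd n k G hk2 hkn hG0 hG2
      have hdvd1 : (2:ℤ)^(v+1) ∣ g^j * (n.choose j : ℤ) := by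
        have this := Int.natCast_dvd_natCast.mpr hnat
        push_cast at this
        have hgj : g^j = (G:ℤ)^(2*k) := by
          rw [show j = 2*k by omega, pow_mul, pow_mul, ← hGg]
        rw [hgj, show j = 2*k by omega]
        calc (2:ℤ)^(v+1) ∣ (n.choose (2*k) : ℤ) * (G:ℤ)^(2*k) := this
          _ = (G:ℤ)^(2*k) * (n.choose (2*k) : ℤ) := by ring
      have hdvd4 : (4:ℤ) ∣ g^j := by
        obtain ⟨m, hm⟩ := hg2
        have hjj : g^j = g^2 * g^(j-2) := by rw [← pow_add]; congr 1; omega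
        have : g^j = 4 * (m^2 * g^(j-2)) := by rw [hjj, hm]; ring
        exact ⟨_, this⟩
      constructor
      · rcases hccpm with hc | hc
        · rw [hf]; simp only [hc, mul_one]; exact hdvd1
        · rw [hf]; simp only [hc, mul_neg_one]; exact dvd_neg.mpr hdvd1
      · rw [hf]; simp only
        exact (hdvd4.mul_right _).mul_right _
    · -- j odd: cc (n-j) = 0
      have : cc (n - j) = 0 := by
        rcases hodd with ⟨m, hm⟩
        rw [show n - j = 2*(m - k) by omega, cc_even]
      rw [hf]; simp only [this, mul_zero]
      exact ⟨dvd_zero _, dvd_zero _⟩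
  have hR1 : (2:ℤ)^(v+1) ∣ R := Finset.dvd_sum fun j hj => (hRdvd j hj).1
  have hR4 : (4:ℤ) ∣ R := Finset.dvd_sum fun j hj => (hRdvd j hj).2
  -- S = ±1
  have hSpm : S = 1 ∨ S = -1 := Int.natAbs_eq_iff.mp hcon |>.imp id (by simp)
  -- main equation
  have hmain : g^2 * (n.choose 2 : ℤ) = 1 - ε * S + ε * R := by
    have hε2 : ε * ε = 1 := by rcases hεpm with h1 | h1 <;> simp [h1]
    have := hsplit
    rw [hf0, hf2] at this
    -- S = ε - ε * X + R
    have : ε * S = ε * ε - ε*ε*(g^2 * (n.choose 2:ℤ)) + ε * R := by rw [this]; ring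
    rw [hε2] at this
    linarith
  have h4g : (4:ℤ) ∣ g^2 * (n.choose 2:ℤ) := by
    obtain ⟨m, hm⟩ := hg2
    exact ⟨m^2 * (n.choose 2:ℤ), by rw [hm]; ring⟩
  have hεS : ε * S = 1 ∨ ε * S = -1 := by
    rcases hεpm with h1 | h1 <;> rcases hSpm with h2 | h2 <;> simp [h1, h2]
  rcases hεS with h1 | h1
  · rw [h1] at hmain
    have hdvd : (2:ℤ)^(v+1) ∣ g^2 * (n.choose 2:ℤ) := by
      rw [hmain]
      simpa using hR1.mul_left ε
    have hcast : g^2*(n.choose 2:ℤ) = ((n.choose 2 * G^2 : ℕ):ℤ) := by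
      push_cast
      rw [hGg]; ring
    rw [hcast] at hdvd
    have hnot : ¬ (2:ℕ)^(v+1) ∣ n.choose 2 * G^2 :=
      pow_succ_padicValNat_not_dvd (Nat.mul_ne_zero (Nat.choose_pos (by omega : 2 ≤ n)).ne' (pow_ne_zero _ hG0))
    exact hnot (by exact_mod_cast hdvd)
  · rw [h1] at hmain
    have h42 : (4:ℤ) ∣ 2 := by
      have := dvd_sub h4g (hR4.mul_left ε)
      rw [hmain] at this
      simpa using this
    norm_num at h42

lemma norm_im_sq (z : GaussianInt) : z.norm = z.re^2 + z.im^2 := by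
  rw [Zsqrtd.norm_def]; ring

lemma norm_eq_one_of_im_pow (γ : GaussianInt) (n : ℕ) (hn : 2 ≤ n)
    (him : ((γ ^ n).im).natAbs = 1) : γ.norm = 1 := by
  set g := γ.re with hg
  set h := γ.im with hh
  have hdvd : h.natAbs ∣ (γ^n).im.natAbs := Int.natAbs_dvd_natAbs.mpr (im_dvd_im_pow γ n)
  rw [him] at hdvd
  have hh1 : h.natAbs = 1 := Nat.eq_one_of_dvd_one hdvd
  have hh2 : h^2 = 1 := by
    rcases Int.natAbs_eq_iff.mp hh1 with h1 | h1 <;> rw [h1] <;> norm_num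
  set x := (γ^n).re with hx
  set y := (γ^n).im with hy
  have hy2 : y^2 = 1 := by
    rcases Int.natAbs_eq_iff.mp him with h1 | h1 <;> rw [h1] <;> norm_num
  have hnorm : x^2 + 1 = γ.norm ^ n := by
    calc x^2 + 1 = x^2 + y^2 := by rw [hy2]
      _ = (γ^n).norm := (norm_im_sq _).symm
      _ = γ.norm ^ n := map_pow Zsqrtd.normMonoidHom γ n
  have hN : γ.norm = g^2 + 1 := by rw [norm_im_sq, hh2]
  by_contra hne
  have hg0 : g ≠ 0 := by
    intro h0
    rw [h0] at hN; simp at hN; exact hne hN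
  have hgsq : 0 < g^2 := by positivity
  have hN2 : 2 ≤ γ.norm := by linarith
  rcases Nat.even_or_odd n with ⟨m, hm⟩ | hodd
  · -- n even
    have hm1 : 1 ≤ m := by omega
    set q := γ.norm ^ m with hq
    have hq2 : 2 ≤ q := by
      calc (2:ℤ) ≤ γ.norm := hN2
        _ = γ.norm^1 := (pow_one _).symm
        _ ≤ γ.norm^m := pow_le_pow_right₀ (by omega) (by omega)
    have hqx : x^2 + 1 = q^2 := by
      rw [hnorm, hq, ← pow_mul]; congr 1; omega
    have hfac : (q - x) * (q + x) = 1 := by linear_combination -hqx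
    rcases Int.mul_eq_one_iff_eq_one_or_neg_one.mp hfac with ⟨h1, h2⟩ | ⟨h1, h2⟩ <;> omega
  · -- n odd
    rcases Int.even_or_odd g with ⟨t, ht⟩ | ⟨t, ht⟩
    · -- g even : key lemma
      have h3 : 3 ≤ n := by
        rcases hodd with ⟨m, hm⟩; omega
      exact key n g h hodd h3 hh2 ⟨t, by linarith⟩ hg0 him
    · -- g odd : mod 4
      have h4 : (4:ℤ) ∣ x^2 + 1 := by
        rw [hnorm]
        have hsplit : γ.norm^n = γ.norm^2 * γ.norm^(n-2) := by
          rw [← pow_add]; congr 1; omega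
        rw [hsplit, hN, ht]
        exact ⟨(2*t^2+2*t+1)^2 * (((2*t+1)^2+1)^(n-2)), by ring⟩
      obtain ⟨K, hK⟩ := h4
      rcases Int.even_or_odd x with ⟨s, hs⟩ | ⟨s, hs⟩
      · rw [hs] at hK
        have h41 : (4:ℤ) ∣ 1 := ⟨K - s^2, by nlinarith [hK]⟩
        norm_num at h41
      · rw [hs] at hK
        have h41 : (4:ℤ) ∣ 2 := ⟨K - s^2 - s, by nlinarith [hK]⟩
        norm_num at h41

lemma no_unit_pow (γ η : GaussianInt) (hη : IsUnit η) (m : ℕ) (hm : 2 ≤ m) (c : ℤ)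
    (hc : 1 ≤ c) (heq : η * γ ^ m = ⟨-c, 1⟩) : False := by
  have hnη : η.norm = 1 := by
    have h1 := Zsqrtd.norm_eq_one_iff.mpr hη
    have hnn : 0 ≤ η.norm := Zsqrtd.norm_nonneg (by norm_num) η
    omega
  set r := η.re with hr
  set i := η.im with hi
  have hηsq : r^2 + i^2 = 1 := by have := norm_im_sq η; rw [hnη] at this; linarith
  have hnormeq : γ.norm ^ m = c^2 + 1 := by
    have h2 := congrArg Zsqrtd.norm heq
    rw [Zsqrtd.norm_mul, hnη, one_mul] at h2
    rw [show Zsqrtd.norm (γ^m) = Zsqrtd.norm γ ^ m from map_pow Zsqrtd.normMonoidHom γ m] at h2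
    have h3 : (⟨-c, 1⟩ : GaussianInt).norm = c^2+1 := by rw [norm_im_sq]; ring
    rw [h3] at h2; exact h2
  have hnn : 0 ≤ γ.norm := Zsqrtd.norm_nonneg (by norm_num) γ
  have hN2 : 2 ≤ γ.norm := by
    by_contra hlt
    push_neg at hlt
    have h01 : γ.norm = 0 ∨ γ.norm = 1 := by omega
    rcases h01 with h0 | h0 <;> rw [h0] at hnormeq
    · rw [zero_pow (by omega)] at hnormeq; nlinarith
    · rw [one_pow] at hnormeq; nlinarith
  have him : r * (γ^m).im + i * (γ^m).re = 1 := by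
    have h4 := congrArg Zsqrtd.im heq
    simpa [Zsqrtd.im_mul] using h4
  rcases Nat.even_or_odd m with ⟨k, hk⟩ | hodd
  · -- m even
    have hk1 : 1 ≤ k := by omega
    set q := γ.norm ^ k with hq
    have hq2 : 2 ≤ q := by
      calc (2:ℤ) ≤ γ.norm := hN2
        _ = γ.norm^1 := (pow_one _).symm
        _ ≤ γ.norm^k := pow_le_pow_right₀ (by omega) (by omega)
    have hqc : (q - c) * (q + c) = 1 := by
      have : q^2 = c^2+1 := by rw [hq, ← pow_mul, show k*2 = m by omega]; exact hnormeq
      linear_combination this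
    rcases Int.mul_eq_one_iff_eq_one_or_neg_one.mp hqc with ⟨h1, h2⟩ | ⟨h1, h2⟩ <;> omega
  · -- m odd
    have hcases : (i = 0 ∧ (r = 1 ∨ r = -1)) ∨ (r = 0 ∧ (i = 1 ∨ i = -1)) := by
      have hb1 : -1 ≤ r ∧ r ≤ 1 := by constructor <;> nlinarith [sq_nonneg i]
      have hb2 : -1 ≤ i ∧ i ≤ 1 := by constructor <;> nlinarith [sq_nonneg r]
      obtain ⟨hb1a, hb1b⟩ := hb1
      obtain ⟨hb2a, hb2b⟩ := hb2
      interval_cases r <;> interval_cases i <;> revert hηsq <;> decide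
    rcases hcases with ⟨hi0, hrpm⟩ | ⟨hr0, hipm⟩
    · -- im part of γ^m is ±1
      rw [hi0] at him
      have h5 : ((γ^m).im).natAbs = 1 := by
        rcases hrpm with h6 | h6 <;> rw [h6] at him <;> simp at him <;> omega
      have := norm_eq_one_of_im_pow γ m hm h5
      omega
    · -- re part of γ^m is ±1 : use swapped element
      rw [hr0] at him
      have h5 : ((γ^m).re).natAbs = 1 := by
        rcases hipm with h6 | h6 <;> rw [h6] at him <;> simp at him <;> omega
      set δ : GaussianInt := ⟨γ.im, γ.re⟩ with hδ
      have hswap : δ = Zsqrtd.sqrtd * star γ := by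
        ext <;> simp [hδ, Zsqrtd.re_mul, Zsqrtd.im_mul]
      obtain ⟨k, hk⟩ := hodd
      have hδm : δ^m = (-1)^k * (Zsqrtd.sqrtd * star (γ^m)) := by
        rw [hswap, mul_pow, ← star_pow, hk, pow_add, pow_one, sqrtd_pow_even]
        ring
      have hδim : ((δ^m).im).natAbs = 1 := by
        have h7 : (Zsqrtd.sqrtd * star (γ^m)).im = (γ^m).re := by
          rw [Zsqrtd.im_mul, Zsqrtd.re_star]
          simp
        rcases Nat.even_or_odd k with hke | hke
        · rw [hδm, hke.neg_one_pow, one_mul, h7]; exact h5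
        · rw [hδm, hke.neg_one_pow]
          have h8 : ((-1 : GaussianInt) * (Zsqrtd.sqrtd * star (γ^m))).im
              = -((Zsqrtd.sqrtd * star (γ^m)).im) := by
            rw [neg_one_mul, Zsqrtd.im_neg]
          rw [h8, Int.natAbs_neg, h7]
          exact h5
      have h8 := norm_eq_one_of_im_pow δ m hm hδim
      have h9 : δ.norm = γ.norm := by rw [norm_im_sq, norm_im_sq, hδ]; ring
      omega

lemma dvd_exp (p : GaussianInt) (hp : Prime p) {i j : ℕ} {x y : GaussianInt}
    (hy : ¬ p ∣ y) (h : p^j * y = p^i * x) : i ≤ j := by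
  by_contra hlt
  push_neg at hlt
  have h2 : p^j * y = p^j * (p^(i-j) * x) := by
    rw [h, ← mul_assoc, ← pow_add]
    congr 2
    omega
  have h3 : y = p^(i-j) * x := mul_left_cancel₀ (pow_ne_zero j hp.ne_zero) h2
  exact hy (h3 ▸ dvd_mul_of_dvd_left (dvd_pow_self p (by omega)) x)

lemma natAbs_norm_pos {z : GaussianInt} (hz : z ≠ 0) : 1 ≤ z.norm.natAbs := by
  rcases Nat.eq_zero_or_pos z.norm.natAbs with h0 | h; swap; exact h
  exfalso
  apply hz
  exact (Zsqrtd.norm_eq_zero_iff (by norm_num) z).mp (by omega)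

lemma natAbs_norm_prime {p : GaussianInt} (hp : Prime p) : 2 ≤ p.norm.natAbs := by
  have h1 := natAbs_norm_pos hp.ne_zero
  rcases Nat.lt_or_ge p.norm.natAbs 2 with h | h; swap; exact h
  exfalso
  exact hp.not_unit (Zsqrtd.norm_eq_one_iff.mp (by omega))

lemma structure_lemma (N : ℕ) : ∀ (A B : GaussianInt) (d u w : ℕ), A ≠ 0 →
    A.norm.natAbs ≤ N → 1 ≤ d → 1 ≤ u → 1 ≤ w → Nat.Coprime u w →
    Associated (A ^ (d*u)) (B ^ (d*w)) →
    ∃ γ : GaussianInt, Associated A (γ ^ w) ∧ Associated B (γ ^ u) := by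
  induction N using Nat.strong_induction_on with
  | _ N IH =>
  intro A B d u w hA hAN hd hu hw hco hassoc
  have hdu : d*u ≠ 0 := by positivity
  have hdw : d*w ≠ 0 := by positivity
  have hB : B ≠ 0 := by
    intro h0
    rw [h0, zero_pow hdw] at hassoc
    exact hA (pow_eq_zero_iff hdu |>.mp ((associated_zero_iff_eq_zero _).mp hassoc))
  by_cases hAu : IsUnit A
  · have hBu : IsUnit B := by
      have h1 : IsUnit (A^(d*u)) := hAu.pow _
      have h2 : IsUnit (B^(d*w)) := by
        rcases hassoc with ⟨v, hv⟩; rw [← hv]; exact h1.mul v.isUnit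
      exact (isUnit_pow_iff hdw).mp h2
    exact ⟨1, by simpa using associated_one_iff_isUnit.mpr hAu,
      by simpa using associated_one_iff_isUnit.mpr hBu⟩
  · obtain ⟨p, hpirr, hpA⟩ := WfDvdMonoid.exists_irreducible_factor hAu hA
    have hp : Prime p := hpirr.prime
    obtain ⟨c, A', hpA', hAeq⟩ := WfDvdMonoid.max_power_factor hA hpirr
    have hc1 : 1 ≤ c := by
      rcases Nat.eq_zero_or_pos c with h0 | h; swap; exact h
      rw [h0, pow_zero, one_mul] at hAeq
      exact absurd (hAeq ▸ hpA) hpA'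
    have hpB : p ∣ B := by
      apply hp.dvd_of_dvd_pow (n := d*w)
      rcases hassoc with ⟨v, hv⟩
      rw [← hv]
      exact dvd_mul_of_dvd_left (dvd_pow hpA hdu) v
    obtain ⟨e, B', hpB', hBeq⟩ := WfDvdMonoid.max_power_factor hB hpirr
    have hA'0 : A' ≠ 0 := by intro h0; rw [h0, mul_zero] at hAeq; exact hA hAeq
    have hB'0 : B' ≠ 0 := by intro h0; rw [h0, mul_zero] at hBeq; exact hB hBeq
    have hassoc' : Associated (p^(c*(d*u)) * A'^(d*u)) (p^(e*(d*w)) * B'^(d*w)) := by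
      have h1 : (p^c*A')^(d*u) = p^(c*(d*u)) * A'^(d*u) := by rw [mul_pow, ← pow_mul]
      have h2 : (p^e*B')^(d*w) = p^(e*(d*w)) * B'^(d*w) := by rw [mul_pow, ← pow_mul]
      rw [← h1, ← h2, ← hAeq, ← hBeq]
      exact hassoc
    obtain ⟨v, hv⟩ := hassoc'
    have hndX : ¬ p ∣ A'^(d*u) * v := by
      rw [Units.dvd_mul_right]
      exact fun hdvd => hpA' (hp.dvd_of_dvd_pow hdvd)
    have hndY : ¬ p ∣ B'^(d*w) := fun hdvd => hpB' (hp.dvd_of_dvd_pow hdvd)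
    rw [mul_assoc] at hv
    have hle1 : c*(d*u) ≤ e*(d*w) := dvd_exp p hp hndY hv.symm
    have hle2 : e*(d*w) ≤ c*(d*u) := dvd_exp p hp hndX hv
    have hij : c*(d*u) = e*(d*w) := le_antisymm hle1 hle2
    have hce : c * u = e * w := by
      have h1 : d*(c*u) = d*(e*w) := by
        rw [show d*(c*u) = c*(d*u) by ring, show d*(e*w) = e*(d*w) by ring]
        exact hij
      exact Nat.eq_of_mul_eq_mul_left (by omega) h1
    have hwc : w ∣ c := by
      apply (Nat.Coprime.dvd_of_dvd_mul_right (Nat.Coprime.symm hco))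
      exact ⟨e, by rw [hce]; ring⟩
    obtain ⟨f, hcf⟩ := hwc
    have hef : e = u * f := by
      have h1 : w*(e) = w*(u*f) := by
        rw [show w*e = e*w by ring, ← hce, hcf]; ring
      exact Nat.eq_of_mul_eq_mul_left (by omega) h1
    have hf1 : 1 ≤ f := by
      rcases Nat.eq_zero_or_pos f with h0 | h; swap; exact h
      rw [h0, mul_zero] at hcf; omega
    have hcancel : A'^(d*u) * v = B'^(d*w) := by
      apply mul_left_cancel₀ (pow_ne_zero (c*(d*u)) hp.ne_zero)
      rw [hv, hij]
    have hassoc'' : Associated (A'^(d*u)) (B'^(d*w)) := ⟨v, hcancel⟩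
    have hnormlt : A'.norm.natAbs < N := by
      have hmul : A.norm.natAbs = (p.norm.natAbs)^c * A'.norm.natAbs := by
        rw [hAeq, Zsqrtd.norm_mul, Int.natAbs_mul]
        congr 1
        rw [show Zsqrtd.norm (p^c) = Zsqrtd.norm p ^ c from map_pow Zsqrtd.normMonoidHom p c,
          Int.natAbs_pow]
      have h2 : 2 ≤ p.norm.natAbs := natAbs_norm_prime hp
      have h3 : 1 ≤ A'.norm.natAbs := natAbs_norm_pos hA'0
      have h4 : 2 ≤ (p.norm.natAbs)^c := le_trans h2 (Nat.le_self_pow (by omega) _)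
      calc A'.norm.natAbs < 2 * A'.norm.natAbs := by omega
        _ ≤ (p.norm.natAbs)^c * A'.norm.natAbs := Nat.mul_le_mul_right _ h4
        _ = A.norm.natAbs := hmul.symm
        _ ≤ N := hAN
    obtain ⟨γ', hγA, hγB⟩ :=
      IH A'.norm.natAbs hnormlt A' B' d u w hA'0 le_rfl hd hu hw hco hassoc''
    refine ⟨p^f * γ', ?_, ?_⟩
    · rw [hAeq, hcf]
      have h5 : (p^f*γ')^w = p^(w*f) * γ'^w := by
        rw [mul_pow, ← pow_mul, mul_comm f w]
      rw [h5]
      exact hγA.mul_left _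
    · rw [hBeq, hef]
      have h5 : (p^f*γ')^u = p^(u*f) * γ'^u := by
        rw [mul_pow, ← pow_mul, mul_comm f u]
      rw [h5]
      exact hγB.mul_left _

lemma assoc_natAbs_norm {x y : GaussianInt} (h : Associated x y) :
    x.norm.natAbs = y.norm.natAbs := by
  obtain ⟨v, hv⟩ := h
  rw [← hv, Zsqrtd.norm_mul, Int.natAbs_mul,
    Zsqrtd.norm_eq_one_iff.mpr v.isUnit, mul_one]

lemma gauss_main (a b : ℕ) (ha : 1 ≤ a) (hb : 1 ≤ b) (hab : a ≠ b) (p q : ℕ)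
    (hp : 1 ≤ p) (hq : 1 ≤ q)
    (h : (⟨-(a:ℤ), 1⟩ : GaussianInt) ^ p = (⟨-(b:ℤ), 1⟩ : GaussianInt) ^ q) : False := by
  set A : GaussianInt := ⟨-(a:ℤ), 1⟩ with hAdef
  set B : GaussianInt := ⟨-(b:ℤ), 1⟩ with hBdef
  have hA0 : A ≠ 0 := by
    intro h0
    have := congrArg Zsqrtd.im h0
    simp [hAdef] at this
  set d := Nat.gcd p q with hgcd
  have hd1 : 1 ≤ d := Nat.gcd_pos_of_pos_left q (by omega)
  set u := p / d with hudef
  set w := q / d with hwdef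
  have hpd : p = d * u := (Nat.mul_div_cancel' (Nat.gcd_dvd_left p q)).symm
  have hqd : q = d * w := (Nat.mul_div_cancel' (Nat.gcd_dvd_right p q)).symm
  have hu1 : 1 ≤ u := by
    rcases Nat.eq_zero_or_pos u with h0 | h1
    · rw [h0, mul_zero] at hpd; omega
    · exact h1
  have hw1 : 1 ≤ w := by
    rcases Nat.eq_zero_or_pos w with h0 | h1
    · rw [h0, mul_zero] at hqd; omega
    · exact h1
  have hco : Nat.Coprime u w := Nat.coprime_div_gcd_div_gcd (by omega)
  have hassoc : Associated (A ^ (d*u)) (B ^ (d*w)) := by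
    rw [← hpd, ← hqd, h]
  obtain ⟨γ, hγA, hγB⟩ := structure_lemma A.norm.natAbs A B d u w hA0 le_rfl hd1 hu1 hw1 hco hassoc
  rcases Nat.lt_or_ge w 2 with hw2 | hw2
  · rcases Nat.lt_or_ge u 2 with hu2 | hu2
    · -- u = w = 1
      have hu1' : u = 1 := by omega
      have hw1' : w = 1 := by omega
      rw [hw1', pow_one] at hγA
      rw [hu1', pow_one] at hγB
      have heqn := (assoc_natAbs_norm hγA).trans (assoc_natAbs_norm hγB).symm
      have hnA : A.norm = (a:ℤ)^2 + 1 := by rw [norm_im_sq]; simp [hAdef]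
      have hnB : B.norm = (b:ℤ)^2 + 1 := by rw [norm_im_sq]; simp [hBdef]
      have e1 : (A.norm.natAbs:ℤ) = (a:ℤ)^2+1 := by
        rw [Int.natAbs_of_nonneg (by rw [hnA]; positivity), hnA]
      have e2 : (B.norm.natAbs:ℤ) = (b:ℤ)^2+1 := by
        rw [Int.natAbs_of_nonneg (by rw [hnB]; positivity), hnB]
      have e3 : (A.norm.natAbs:ℤ) = (B.norm.natAbs:ℤ) := by exact_mod_cast heqn
      have e4 : ((a:ℤ)-b)*((a:ℤ)+b) = 0 := by linear_combination e1.symm.trans (e3.trans e2)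
      rcases mul_eq_zero.mp e4 with e5 | e5 <;> omega
    · -- 2 ≤ u : use B
      obtain ⟨η, hη⟩ := hγB.symm
      exact no_unit_pow γ η η.isUnit u hu2 (b:ℤ) (by exact_mod_cast hb)
        (by rw [mul_comm]; exact hη)
  · obtain ⟨η, hη⟩ := hγA.symm
    exact no_unit_pow γ η η.isUnit w hw2 (a:ℤ) (by exact_mod_cast ha)
      (by rw [mul_comm]; exact hη)

lemma abs_gt_one (a : ℕ) (ha : 0 < a) : 1 < ‖-(a:ℂ) + Complex.I‖ := by
  have h1 : (‖-(a:ℂ) + Complex.I‖)^2 = (a:ℝ)^2 + 1 := by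
    rw [Complex.sq_norm, Complex.normSq_apply]
    simp
    ring
  have h2 : (1:ℝ) ≤ (a:ℝ) := by exact_mod_cast ha
  nlinarith [norm_nonneg (-(a:ℂ) + Complex.I)]

lemma toC (a : ℕ) : ((⟨-(a:ℤ), 1⟩ : GaussianInt) : ℂ) = -(a:ℂ) + Complex.I := by
  rw [GaussianInt.toComplex_def']
  push_cast
  ring

lemma pow_eq_pow_case (a b : ℕ) (ha : 0 < a) (hb : 0 < b) (hab : a ≠ b)
    (P Q : ℕ) (hP : 1 ≤ P) (hQ : 1 ≤ Q)
    (h : (-(a:ℂ) + Complex.I)^P = (-(b:ℂ) + Complex.I)^Q) : False := by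
  apply gauss_main a b ha hb hab P Q hP hQ
  apply GaussianInt.toComplex_injective
  push_cast [map_pow, toC]
  exact_mod_cast h

theorem main (a b : ℕ) (ha : 0 < a) (hb : 0 < b) (hab : a ≠ b) :
    ¬ ∃ u v : ℤ, (u ≠ 0 ∨ v ≠ 0) ∧
      ((-(a : ℂ) + Complex.I) ^ u) * ((-(b : ℂ) + Complex.I) ^ v) = 1 := by
  rintro ⟨u, v, hne, heq⟩
  set α : ℂ := -(a:ℂ) + Complex.I with hα
  set β : ℂ := -(b:ℂ) + Complex.I with hβ
  have hαa : 1 < ‖α‖ := abs_gt_one a ha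
  have hβa : 1 < ‖β‖ := abs_gt_one b hb
  have hα0 : α ≠ 0 := by
    intro h0
    rw [h0, _root_.norm_zero] at hαa
    norm_num at hαa
  have hβ0 : β ≠ 0 := by
    intro h0
    rw [h0, _root_.norm_zero] at hβa
    norm_num at hβa
  have habs : (‖α‖)^u * (‖β‖)^v = 1 := by
    rw [← _root_.norm_zpow, ← _root_.norm_zpow, ← _root_.norm_mul, heq, NormOneClass.norm_one]
  have hLα : 0 < Real.log (‖α‖) := Real.log_pos hαa
  have hLβ : 0 < Real.log (‖β‖) := Real.log_pos hβa
  have hlog : (u:ℝ) * Real.log (‖α‖) + (v:ℝ) * Real.log (‖β‖) = 0 := by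
    have h1 := congrArg Real.log habs
    rw [Real.log_mul (zpow_ne_zero _ (by positivity)) (zpow_ne_zero _ (by positivity)),
      Real.log_zpow, Real.log_zpow, Real.log_one] at h1
    exact h1
  -- sign analysis
  have key2 : ∀ s t : ℤ, 0 < s → t < 0 →
      α ^ s * β ^ t = 1 → 1 < ‖α‖ → 1 < ‖β‖ → False → False := fun _ _ _ _ _ _ _ f => f
  -- main case split
  rcases lt_trichotomy u 0 with hu | hu | hu <;> rcases lt_trichotomy v 0 with hv | hv | hv
  · -- both negative
    have h1 : (u:ℝ) < 0 := by exact_mod_cast hu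
    have h2 : (v:ℝ) < 0 := by exact_mod_cast hv
    nlinarith
  · -- u < 0, v = 0
    have h1 : (u:ℝ) < 0 := by exact_mod_cast hu
    rw [hv] at hlog
    push_cast at hlog
    nlinarith
  · -- u < 0 < v : β^v = α^(-u)
    have heq2 : β ^ v = α ^ (-u) := by
      have h1 : α ^ u * α ^ (-u) = 1 := by
        rw [← zpow_add₀ hα0]
        simp
      calc β ^ v = (α ^ u * β ^ v) * α ^ (-u) := by
            rw [mul_comm (α^u), mul_assoc, h1, mul_one]
        _ = α ^ (-u) := by rw [heq, one_mul]
    set P := v.toNat with hP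
    set Q := (-u).toNat with hQ
    have hPv : (P:ℤ) = v := Int.toNat_of_nonneg (by omega)
    have hQu : (Q:ℤ) = -u := Int.toNat_of_nonneg (by omega)
    have hfin : β ^ P = α ^ Q := by
      rw [← zpow_natCast β P, ← zpow_natCast α Q, hPv, hQu]
      exact heq2
    exact pow_eq_pow_case b a hb ha (Ne.symm hab) P Q (by omega) (by omega) hfin
  · -- u = 0, v < 0
    have h2 : (v:ℝ) < 0 := by exact_mod_cast hv
    rw [hu] at hlog
    push_cast at hlog
    nlinarith
  · exact hne.elim (fun h => h hu) (fun h => h hv)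
  · -- u = 0, v > 0
    have h2 : (0:ℝ) < (v:ℝ) := by exact_mod_cast hv
    rw [hu] at hlog
    push_cast at hlog
    nlinarith
  · -- u > 0, v < 0 : α^u = β^(-v)
    have heq2 : α ^ u = β ^ (-v) := by
      have h1 : β ^ v * β ^ (-v) = 1 := by
        rw [← zpow_add₀ hβ0]
        simp
      calc α ^ u = (α ^ u * β ^ v) * β ^ (-v) := by
            rw [mul_assoc, h1, mul_one]
        _ = β ^ (-v) := by rw [heq, one_mul]
    set P := u.toNat with hP
    set Q := (-v).toNat with hQ
    have hPu : (P:ℤ) = u := Int.toNat_of_nonneg (by omega)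
    have hQv : (Q:ℤ) = -v := Int.toNat_of_nonneg (by omega)
    have hfin : α ^ P = β ^ Q := by
      rw [← zpow_natCast α P, ← zpow_natCast β Q, hPu, hQv]
      exact heq2
    exact pow_eq_pow_case a b ha hb hab P Q (by omega) (by omega) hfin
  · -- u > 0, v = 0
    have h1 : (0:ℝ) < (u:ℝ) := by exact_mod_cast hu
    rw [hv] at hlog
    push_cast at hlog
    nlinarith
  · -- both positive
    have h1 : (0:ℝ) < (u:ℝ) := by exact_mod_cast hu
    have h2 : (0:ℝ) < (v:ℝ) := by exact_mod_cast hv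
    nlinarith


end IndepAux

theorem stmt_0 (a b : ℕ) (ha : 0 < a) (hb : 0 < b) (hab : a ≠ b) :
    ¬ ∃ u v : ℤ, (u ≠ 0 ∨ v ≠ 0) ∧
      ((-(a : ℂ) + Complex.I) ^ u) * ((-(b : ℂ) + Complex.I) ^ v) = 1 := by
  exact IndepAux.main a b ha hb hab
end

section
/- If a and b are positive integers with a ≠ b and a² + 1 and b² + 1 are multiplicatively dependent integers, then there exist a positive integer x and positive integers v, w with max(v, w) ≥ 3 such that a² + 1 = x^v and b² + 1 = x^w. -/
-- From the zpow relation, extract natural exponents with A^m = B^n (or swapped).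
lemma aux_opp {A B : ℚ} (hA : 1 < A) (hB : 1 < B) {u v : ℤ}
    (hne : u ≠ 0 ∨ v ≠ 0) (h : A ^ u * B ^ v = 1) :
    (∃ m n : ℕ, 0 < m ∧ 0 < n ∧ A ^ m = B ^ n) ∨
    (∃ m n : ℕ, 0 < m ∧ 0 < n ∧ B ^ m = A ^ n) := by
  have hA0 : (0:ℚ) < A := lt_trans one_pos hA
  have hB0 : (0:ℚ) < B := lt_trans one_pos hB
  have hAB : A ^ u = B ^ (-v) := by
    rw [zpow_neg]
    exact eq_inv_of_mul_eq_one_left h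
  have hBA : B ^ v = A ^ (-u) := by
    rw [zpow_neg]
    exact eq_inv_of_mul_eq_one_left (by rw [mul_comm]; exact h)
  rcases lt_trichotomy u 0 with hu | hu | hu
  · rcases lt_trichotomy v 0 with hv | hv | hv
    ·
      exfalso
      have h1 : A ^ u < 1 := zpow_lt_one_of_neg₀ hA hu
      have h2 : B ^ v < 1 := zpow_lt_one_of_neg₀ hB hv
      nlinarith [zpow_pos hA0 u, zpow_pos hB0 v]
    · subst hv
      exfalso
      simp only [zpow_zero, mul_one] at h
      exact hu.ne (zpow_right_injective₀ hA0 hA.ne' (h.trans (zpow_zero A).symm))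
    · -- u < 0 < v : B^v = A^(-u)
      right
      refine ⟨v.toNat, (-u).toNat, by omega, by omega, ?_⟩
      rw [← zpow_natCast, ← zpow_natCast, Int.toNat_of_nonneg hv.le,
        Int.toNat_of_nonneg (by omega : (0:ℤ) ≤ -u)]
      exact hBA.symm ▸ rfl
  · subst hu
    exfalso
    simp only [zpow_zero, one_mul] at h
    have : v = 0 := zpow_right_injective₀ hB0 hB.ne' (h.trans (zpow_zero B).symm)
    tauto
  · rcases lt_trichotomy v 0 with hv | hv | hv
    · left
      refine ⟨u.toNat, (-v).toNat, by omega, by omega, ?_⟩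
      rw [← zpow_natCast, ← zpow_natCast, Int.toNat_of_nonneg hu.le,
        Int.toNat_of_nonneg (by omega : (0:ℤ) ≤ -v)]
      exact hAB
    · subst hv
      exfalso
      simp only [zpow_zero, mul_one] at h
      exact hu.ne' (zpow_right_injective₀ hA0 hA.ne' (h.trans (zpow_zero A).symm))
    · exfalso
      have h1 : 1 < A ^ u := one_lt_zpow₀ hA hu
      have h2 : 1 < B ^ v := one_lt_zpow₀ hB hv
      nlinarith

-- contradiction: b^2+1 = (a^2+1)^2 impossible for a,b ≥ 1
lemma aux_nosq {a b : ℕ} (ha : 0 < a) (h : b ^ 2 + 1 = (a ^ 2 + 1) ^ 2) : False := by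
  have hb2 : b ^ 2 = a ^ 2 * (a ^ 2 + 2) := by ring_nf at h ⊢; omega
  have hdvd : a ∣ b := by
    have : a ^ 2 ∣ b ^ 2 := ⟨a ^ 2 + 2, hb2⟩
    exact (Nat.pow_dvd_pow_iff two_ne_zero).mp this
  obtain ⟨c, rfl⟩ := hdvd
  have hc : c ^ 2 = a ^ 2 + 2 := by
    have h2 : a ^ 2 * c ^ 2 = a ^ 2 * (a ^ 2 + 2) := by ring_nf; ring_nf at hb2; omega
    exact Nat.eq_of_mul_eq_mul_left (by positivity) h2
  have h1 : a < c := by nlinarith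
  have h2 : c < a + 1 := by nlinarith
  omega

-- from A^m = B^n over ℚ with casts of naturals, get common base
lemma aux_base {A B : ℕ} (hA : 1 < A) (hB : 1 < B) {m n : ℕ} (hm : 0 < m) (hn : 0 < n)
    (h : ((A : ℚ)) ^ m = (B : ℚ) ^ n) :
    ∃ x v w : ℕ, 1 < x ∧ 0 < v ∧ 0 < w ∧ A = x ^ v ∧ B = x ^ w := by
  set d := Nat.gcd m n with hd
  have hd0 : 0 < d := Nat.gcd_pos_of_pos_left n hm
  have hm' : m = d * (m / d) := (Nat.mul_div_cancel' (Nat.gcd_dvd_left m n)).symm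
  have hn' : n = d * (n / d) := (Nat.mul_div_cancel' (Nat.gcd_dvd_right m n)).symm
  have hcop : Nat.Coprime (m / d) (n / d) := Nat.coprime_div_gcd_div_gcd hd0
  have hkey : ((A : ℚ)) ^ (m / d) = (B : ℚ) ^ (n / d) := by
    have h2 : (((A : ℚ)) ^ (m / d)) ^ d = (((B : ℚ)) ^ (n / d)) ^ d := by
      rw [← pow_mul, ← pow_mul, mul_comm (m/d) d, mul_comm (n/d) d, ← hm', ← hn', h]
    exact (pow_left_inj₀ (by positivity) (by positivity) hd0.ne').mp h2
  obtain ⟨c, hcA, hcB⟩ := (pow_eq_pow_iff_of_coprime hcop).mp hkey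
  -- replace c by |c|
  have hmd : 0 < m / d := Nat.div_pos (Nat.le_of_dvd hm (Nat.gcd_dvd_left m n)) hd0
  have hnd : 0 < n / d := Nat.div_pos (Nat.le_of_dvd hn (Nat.gcd_dvd_right m n)) hd0
  have hcA' : |c| ^ (n / d) = (A : ℚ) := by
    rw [← abs_pow, ← hcA, abs_of_nonneg (by positivity : (0:ℚ) ≤ (A:ℚ))]
  have hcB' : |c| ^ (m / d) = (B : ℚ) := by
    rw [← abs_pow, ← hcB, abs_of_nonneg (by positivity : (0:ℚ) ≤ (B:ℚ))]
  -- |c| is an integer: its den is 1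
  have hden : (|c|).den = 1 := by
    have : ((|c|) ^ (n / d)).den = 1 := by rw [hcA']; exact Rat.den_natCast A
    rw [Rat.den_pow] at this
    exact (pow_eq_one_iff.mp this).resolve_right hnd.ne'
  set x := (|c|).num.toNat with hx
  have hnum : ((|c|.num : ℚ)) = |c| := (Rat.den_eq_one_iff _).mp hden
  have hxc : ((x : ℚ)) = |c| := by
    rw [← hnum]
    exact_mod_cast Int.toNat_of_nonneg (Rat.num_nonneg.mpr (abs_nonneg c))
  have hAx : A = x ^ (n / d) := by
    have : ((x : ℚ)) ^ (n / d) = (A : ℚ) := by rw [hxc]; exact hcA'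
    exact_mod_cast this.symm
  have hBx : B = x ^ (m / d) := by
    have : ((x : ℚ)) ^ (m / d) = (B : ℚ) := by rw [hxc]; exact hcB'
    exact_mod_cast this.symm
  refine ⟨x, n / d, m / d, ?_, hnd, hmd, hAx, hBx⟩
  by_contra hle
  push_neg at hle
  interval_cases x
  · rw [Nat.zero_pow hnd] at hAx; omega
  · rw [one_pow] at hAx; omega

theorem stmt_2 (a b : ℕ) (ha : 0 < a) (hb : 0 < b) (hab : a ≠ b)
    (hdep : ∃ u v : ℤ, (u ≠ 0 ∨ v ≠ 0) ∧
      ((a : ℚ) ^ 2 + 1) ^ u * ((b : ℚ) ^ 2 + 1) ^ v = 1) :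
    ∃ x v w : ℕ, 0 < x ∧ 0 < v ∧ 0 < w ∧ 3 ≤ max v w ∧
      a ^ 2 + 1 = x ^ v ∧ b ^ 2 + 1 = x ^ w := by
  obtain ⟨u, v, hne, heq⟩ := hdep
  set A := a ^ 2 + 1 with hAdef
  set B := b ^ 2 + 1 with hBdef
  have hA : 1 < A := by nlinarith
  have hB : 1 < B := by nlinarith
  have hcastA : ((a : ℚ) ^ 2 + 1) = (A : ℚ) := by push_cast [hAdef]; ring
  have hcastB : ((b : ℚ) ^ 2 + 1) = (B : ℚ) := by push_cast [hBdef]; ring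
  rw [hcastA, hcastB] at heq
  have hAQ : (1 : ℚ) < (A : ℚ) := by exact_mod_cast hA
  have hBQ : (1 : ℚ) < (B : ℚ) := by exact_mod_cast hB
  have hABne : A ≠ B := fun h => hab (by
    have : a ^ 2 = b ^ 2 := by omega
    exact Nat.pow_left_injective (by norm_num) this)
  -- get common base
  have key : ∃ x p q : ℕ, 1 < x ∧ 0 < p ∧ 0 < q ∧ A = x ^ p ∧ B = x ^ q := by
    rcases aux_opp hAQ hBQ hne heq with ⟨m, n, hm, hn, h⟩ | ⟨m, n, hm, hn, h⟩
    · obtain ⟨x, p, q, hx, hp, hq, h1, h2⟩ := aux_base hA hB hm hn h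
      exact ⟨x, p, q, hx, hp, hq, h1, h2⟩
    · obtain ⟨x, p, q, hx, hp, hq, h1, h2⟩ := aux_base hB hA hm hn h
      exact ⟨x, q, p, hx, hq, hp, h2, h1⟩
  obtain ⟨x, p, q, hx, hp, hq, h1, h2⟩ := key
  have hpq : p ≠ q := fun h => hABne (by rw [h1, h2, h])
  rcases le_or_gt 3 (max p q) with hmax | hmax
  · exact ⟨x, p, q, by omega, hp, hq, hmax, h1, h2⟩
  · exfalso
    have hp2 : p ≤ 2 := le_trans (le_max_left p q) (by omega)
    have hq2 : q ≤ 2 := le_trans (le_max_right p q) (by omega)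
    rw [hAdef] at h1
    rw [hBdef] at h2
    interval_cases p <;> interval_cases q
    · exact hpq rfl
    · rw [pow_one] at h1
      exact aux_nosq ha (by rw [h2, ← h1])
    · rw [pow_one] at h2
      exact aux_nosq hb (by rw [h1, ← h2])
    · exact hpq rfl
end

section
/- (Lebesgue's theorem) The equation a² + 1 = x^v has no solutions in positive integers a, x, v with v ≥ 3. -/
open Zsqrtd Finset

local notation "ℤi" => GaussianInt

lemma sum_range_two_mul {M : Type*} [AddCommMonoid M] (f : ℕ → M) (n : ℕ) :
    ∑ k ∈ range (2*n), f k = ∑ j ∈ range n, (f (2*j) + f (2*j+1)) := by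
  induction n with
  | zero => simp
  | succ n ih =>
      have : 2 * (n+1) = (2*n + 1) + 1 := by ring
      rw [this, sum_range_succ, sum_range_succ, ih, sum_range_succ]
      abel

lemma Isq : (⟨0,1⟩ : ℤi)^2 = -1 := by
  ext <;> simp [pow_two, Zsqrtd.re_mul, Zsqrtd.im_mul]

lemma Ipow_even (q : ℕ) : (⟨0,1⟩ : ℤi)^(2*q) = (((-1 : ℤ)^q : ℤ) : ℤi) := by
  rw [pow_mul, Isq]
  push_cast
  rfl

lemma Ipow_odd (q : ℕ) : (⟨0,1⟩ : ℤi)^(2*q+1) = (((-1 : ℤ)^q : ℤ) : ℤi) * ⟨0,1⟩ := by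
  rw [pow_succ, Ipow_even]

lemma cast_pow_re (s : ℤ) (k : ℕ) : (((s:ℤ) : ℤi)^k).re = s^k := by
  rw [← Int.cast_pow]; exact Zsqrtd.re_intCast _

lemma cast_pow_im (s : ℤ) (k : ℕ) : (((s:ℤ) : ℤi)^k).im = 0 := by
  rw [← Int.cast_pow]; exact Zsqrtd.im_intCast _

lemma neg_one_pow_re (n : ℕ) : ((-1 : ℤi)^n).re = (-1)^n := by
  have : (-1 : ℤi) = ((-1 : ℤ) : ℤi) := by push_cast; ring
  rw [this, cast_pow_re]

lemma neg_one_pow_im (n : ℕ) : ((-1 : ℤi)^n).im = 0 := by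
  have : (-1 : ℤi) = ((-1 : ℤ) : ℤi) := by push_cast; ring
  rw [this, cast_pow_im]

lemma im_pow_eq (s : ℤ) (m : ℕ) :
    ((⟨s,1⟩ : ℤi) ^ (2*m+1)).im
      = ∑ j ∈ range (m+1), (-1 : ℤ)^(m-j) * ((2*m+1).choose (2*j) : ℤ) * s^(2*j) := by
  have hz : (⟨s,1⟩ : ℤi) = (s : ℤi) + ⟨0,1⟩ := by
    ext <;> simp
  rw [hz, add_pow]
  have himsum : ∀ (T : Finset ℕ) (f : ℕ → ℤi), (∑ k ∈ T, f k).im = ∑ k ∈ T, (f k).im := by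
    intro T f
    exact map_sum (AddMonoidHom.mk' Zsqrtd.im (fun _ _ => rfl)) f T
  rw [himsum]
  have h2 : 2*m+1+1 = 2*(m+1) := by ring
  rw [h2, sum_range_two_mul]
  apply Finset.sum_congr rfl
  intro j hj
  have hjm : j ≤ m := by simpa using Nat.lt_succ_iff.mp (mem_range.mp hj)
  have e1 : 2*m+1 - 2*j = 2*(m-j)+1 := by omega
  have e2 : 2*m+1 - (2*j+1) = 2*(m-j) := by omega
  rw [e1, e2, Ipow_odd, Ipow_even]
  simp [Zsqrtd.re_mul, Zsqrtd.im_mul, cast_pow_re, cast_pow_im, neg_one_pow_re, neg_one_pow_im]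
  ring


lemma dvd_term {v j σ : ℕ} (hσ : σ ≠ 0) (hσe : 2 ∣ σ) (hj : 2 ≤ j) (hjv : 2*j ≤ v) :
    2 ^ ((v.choose 2 * σ^2).factorization 2 + 1) ∣ v.choose (2*j) * σ^(2*j) := by
  obtain ⟨j', rfl⟩ : ∃ j', j = j'+2 := ⟨j-2, by omega⟩
  set j := j' + 2
  have hc2j : v.choose (2*j) ≠ 0 := (Nat.choose_pos hjv).ne'
  have hc2 : v.choose 2 ≠ 0 := (Nat.choose_pos (by omega)).ne'
  have hcd : (v-2).choose (2*j-2) ≠ 0 := (Nat.choose_pos (by omega)).ne'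
  have hjj : (2*j).choose 2 = j * (2*j-1) := by
    rw [Nat.choose_two_right]
    have : 2*j*(2*j-1) = 2*(j*(2*j-1)) := by ring
    rw [this, Nat.mul_div_cancel_left _ (by norm_num)]
  have idty : v.choose (2*j) * (j*(2*j-1)) = v.choose 2 * ((v-2).choose (2*j-2)) := by
    rw [← hjj, Nat.choose_mul (n := v) (by omega : 2 ≤ 2*j)]
  have hodd : ((2*j-1) : ℕ).factorization 2 = 0 := by
    apply Nat.factorization_eq_zero_of_not_dvd
    omega
  have h1 : (v.choose (2*j)).factorization 2 + ((j:ℕ).factorization 2)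
      = (v.choose 2).factorization 2 + ((v-2).choose (2*j-2)).factorization 2 := by
    have hj0 : (j:ℕ) ≠ 0 := by omega
    have hj1 : (2*j-1 : ℕ) ≠ 0 := by omega
    have := congrArg (fun n : ℕ => n.factorization 2) idty
    rw [Nat.factorization_mul hc2j (Nat.mul_ne_zero hj0 hj1),
      Nat.factorization_mul hc2 hcd,
      Nat.factorization_mul hj0 hj1] at this
    simp only [Finsupp.add_apply, hodd] at this
    omega
  have hFj : (j:ℕ).factorization 2 < j := Nat.factorization_lt 2 (by omega)
  have hG : 0 < σ.factorization 2 := Nat.Prime.factorization_pos_of_dvd Nat.prime_two hσ hσe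
  rw [Nat.Prime.pow_dvd_iff_le_factorization Nat.prime_two (by positivity)]
  rw [Nat.factorization_mul hc2j (by positivity), Nat.factorization_mul hc2 (by positivity),
    Finsupp.add_apply, Finsupp.add_apply, Nat.factorization_pow, Nat.factorization_pow,
    Finsupp.smul_apply, Finsupp.smul_apply]
  simp only [smul_eq_mul]
  set G := σ.factorization 2 with hGdef
  set A := (v.choose (2*j)).factorization 2
  set B := (v.choose 2).factorization 2
  have e3 : 2*j*G = 2*j'*G + 4*G := by ring
  have h7 : j' ≤ 2*j'*G := by
    calc j' ≤ 2*j' := by omega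
    _ ≤ 2*j'*G := Nat.le_mul_of_pos_right _ hG
  rw [e3]
  generalize 2*j'*G = X at h7 ⊢
  omega

lemma key (S : ℤ) (hS0 : S ≠ 0) (hSe : (2:ℤ) ∣ S) (m : ℕ) (hm : 1 ≤ m) (ε : ℤ)
    (hε : ε = 1 ∨ ε = -1) (h : ((⟨S,1⟩ : ℤi)^(2*m+1)).im = ε) : False := by
  rw [im_pow_eq] at h
  obtain ⟨n, rfl⟩ : ∃ n, m = n+1 := ⟨m-1, by omega⟩
  set m := n + 1
  set v := 2*m+1 with hv
  set σ := S.natAbs with hσdef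
  have hσ0 : σ ≠ 0 := Int.natAbs_ne_zero.mpr hS0
  have hσe : 2 ∣ σ := by
    obtain ⟨k, rfl⟩ := hSe
    exact Dvd.intro k.natAbs (by rw [hσdef, Int.natAbs_mul]; rfl)
  have hSσ : S^2 = ((σ:ℤ))^2 := by
    have := Int.natAbs_mul_self' S
    rw [hσdef]; nlinarith [this]
  set c : ℕ := v.choose 2 * σ^2 with hcdef
  set e : ℕ := c.factorization 2 with hedef
  have hc0 : c ≠ 0 := by
    have := Nat.choose_pos (show 2 ≤ v by omega)
    positivity
  -- peel the sum
  set f : ℕ → ℤ := fun j => (-1 : ℤ)^(m-j) * (v.choose (2*j) : ℤ) * S^(2*j) with hf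
  have hsplit : ∑ j ∈ range (m+1), f j = (∑ i ∈ range n, f (i+2)) + f 1 + f 0 := by
    rw [Finset.sum_range_succ' f (m), Finset.sum_range_succ' (fun i => f (i+1)) n]
  rw [hsplit] at h
  set R := ∑ i ∈ range n, f (i+2) with hR
  have hPR : (2:ℤ)^(e+1) ∣ R := by
    apply Finset.dvd_sum
    intro i hi
    have hin : i < n := mem_range.mp hi
    have hdt : 2 ^ (e+1) ∣ v.choose (2*(i+2)) * σ^(2*(i+2)) :=
      dvd_term hσ0 hσe (by omega) (by omega)
    have hcast : ((2:ℤ))^(e+1) ∣ ((v.choose (2*(i+2)) * σ^(2*(i+2)) : ℕ) : ℤ) := by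
      exact_mod_cast Int.natCast_dvd_natCast.mpr hdt
    have hterm : f (i+2) = (-1:ℤ)^(m-(i+2)) * ((v.choose (2*(i+2)) * σ^(2*(i+2)) : ℕ) : ℤ) := by
      simp only [hf]
      have hps : S^(2*(i+2)) = ((σ:ℤ))^(2*(i+2)) := by
        rw [pow_mul, pow_mul, hSσ]
      push_cast
      rw [hps]; ring
    rw [hterm]
    exact Dvd.dvd.mul_left hcast _
  have hf0 : f 0 = (-1:ℤ)^m := by simp [hf]
  have hf1 : f 1 = -((-1:ℤ)^m) * (c:ℤ) := by
    have h1' : (-1:ℤ)^(m-1) = -(-1:ℤ)^m := by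
      have hh : (-1:ℤ)^(m-1) * (-1) = (-1)^m := by
        rw [← pow_succ, Nat.sub_add_cancel hm]
      linarith
    have hfv : f 1 = (-1:ℤ)^(m-1) * ((v.choose 2 : ℕ) : ℤ) * S^2 := by
      simp [hf]
    rw [hfv, h1', hSσ, hcdef]
    push_cast
    ring
  set μ := (-1:ℤ)^m with hμdef
  have hμ : μ = 1 ∨ μ = -1 := by
    rcases Nat.even_or_odd m with h'|h'
    · exact Or.inl h'.neg_one_pow
    · exact Or.inr h'.neg_one_pow
  have hμμ : μ * μ = 1 := by rcases hμ with h'|h' <;> rw [h'] <;> ring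
  rw [hf0, hf1] at h
  have hPc : ¬ ((2:ℕ)^(e+1) ∣ c) := Nat.pow_succ_factorization_not_dvd hc0 Nat.prime_two
  have h4c : (4:ℕ) ∣ c := by
    obtain ⟨τ, hτ⟩ := hσe
    exact ⟨v.choose 2 * τ^2, by rw [hcdef, hτ]; ring⟩
  have hPμR : (2:ℤ)^(e+1) ∣ μ * R := Dvd.dvd.mul_left hPR μ
  have he2 : 2 ≤ e + 1 := by
    have : (2:ℕ)^2 ∣ c := by norm_num at h4c ⊢; exact h4c
    have := (Nat.Prime.pow_dvd_iff_le_factorization Nat.prime_two hc0).mp this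
    omega
  have hcases : (c:ℤ) = μ*R ∨ (c:ℤ) - 2 = μ*R := by
    rcases hε with rfl|rfl <;> rcases hμ with h'|h' <;> rw [h'] at h
    · left; rw [h']; linarith
    · right; rw [h']; linarith
    · right; rw [h']; linarith
    · left; rw [h']; linarith
  rcases hcases with hq|hq
  · have : (2:ℤ)^(e+1) ∣ (c:ℤ) := hq ▸ hPμR
    exact hPc (by exact_mod_cast this)
  · have hd : (4:ℤ) ∣ (c:ℤ) - 2 := by
      refine dvd_trans ?_ (hq ▸ hPμR)
      have h4 : (4:ℤ) = 2^2 := by norm_num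
      rw [h4]; exact pow_dvd_pow 2 he2
    have hd2 : (4:ℤ) ∣ (c:ℤ) := by exact_mod_cast Int.natCast_dvd_natCast.mpr h4c
    obtain ⟨k, hk⟩ := hd; obtain ⟨l, hl⟩ := hd2
    omega

set_option maxHeartbeats 1000000 in
theorem stmt_3 : ¬ ∃ a x v : ℕ, 0 < a ∧ 0 < x ∧ 3 ≤ v ∧ a ^ 2 + 1 = x ^ v := by
  rintro ⟨a, x, v, ha, hx, hv, heq⟩
  rcases Nat.even_or_odd v with hev | hodd
  · -- v even : x^v is a perfect square, a^2 + 1 = square impossible for a > 0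
    obtain ⟨w, rfl⟩ := hev
    have hb : (x^w)^2 = a^2 + 1 := by rw [heq, ← pow_mul]; ring_nf
    have h1 : a < x^w := by
      by_contra hcon
      push_neg at hcon
      have := Nat.pow_le_pow_left hcon 2
      omega
    have h2 : a + 1 ≤ x^w := h1
    have h3 := Nat.pow_le_pow_left h2 2
    have h4 : (a+1)^2 = a^2 + 2*a + 1 := by ring
    omega
  · -- v odd
    have hv2 : v % 2 = 1 := Nat.odd_iff.mp hodd
    -- a is even
    have hae : 2 ∣ a := by
      by_contra hao
      obtain ⟨cc, rfl⟩ : ∃ cc, a = 2*cc+1 := ⟨a/2, by omega⟩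
      have hsq : (2*cc+1)^2 = 4*(cc*cc) + 4*cc + 1 := by ring
      rcases Nat.even_or_odd x with hxe | hxo
      · obtain ⟨d, rfl⟩ := hxe
        have h4 : 4 ∣ (d+d)^v := by
          have hsplit : (d+d)^v = (d+d)^2 * (d+d)^(v-2) := by
            rw [← pow_add]; congr 1; omega
          rw [hsplit]
          exact Dvd.dvd.mul_right ⟨d*d, by ring⟩ _
        obtain ⟨k, hk⟩ := h4
        rw [← heq] at hk
        omega
      · obtain ⟨k, hk⟩ := hxo.pow (n := v)
        rw [← heq] at hk
        omega
    obtain ⟨m, hmv⟩ : ∃ m, v = 2*m+1 := ⟨v/2, by omega⟩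
    have hm1 : 1 ≤ m := by omega
    obtain ⟨b, hab⟩ := hae
    have heqZ : ((a:ℤ))^2 + 1 = ((x:ℤ))^v := by exact_mod_cast heq
    set z1 : ℤi := ⟨(a:ℤ), 1⟩ with hz1
    set z2 : ℤi := ⟨(a:ℤ), -1⟩ with hz2
    have hmul : z1 * z2 = ((x:ℤi))^v := by
      have hx' : ((x:ℤi))^v = (((x^v : ℕ)) : ℤi) := by push_cast; ring
      rw [hx']
      ext
      · rw [Zsqrtd.re_mul, Zsqrtd.re_natCast]
        simp only [hz1, hz2]
        push_cast
        linear_combination heqZ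
      · rw [Zsqrtd.im_mul, Zsqrtd.im_natCast]
        simp only [hz1, hz2]
        ring
    have hcop : IsCoprime z1 z2 := by
      refine ⟨⟨(a:ℤ), 2*(b:ℤ)^2 - 1⟩, ⟨0, -2*(b:ℤ)^2⟩, ?_⟩
      have habZ : (a:ℤ) = 2*(b:ℤ) := by exact_mod_cast hab
      ext
      · simp [hz1, hz2, Zsqrtd.re_mul, Zsqrtd.re_add]
        nlinarith [habZ]
      · simp [hz1, hz2, Zsqrtd.im_mul, Zsqrtd.im_add]
        ring
    obtain ⟨d, u, hu⟩ := exists_associated_pow_of_mul_eq_pow' hcop hmul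
    set U : ℤi := (u : ℤi) with hU
    have hUnorm : U.norm = 1 := (Zsqrtd.norm_eq_one_iff' (by norm_num) U).mpr u.isUnit
    have h1 : U.re*U.re + U.im*U.im = 1 := by
      have := hUnorm
      rw [Zsqrtd.norm_def] at this
      linarith
    have h0 : U.re * U.im = 0 := by
      rcases eq_or_ne U.re 0 with h|h
      · rw [h]; ring
      · have h2 : 1 ≤ |U.re| := Int.one_le_abs h
        have h3 : 1 ≤ U.re * U.re := by nlinarith [sq_abs U.re]
        have h4 : U.im * U.im ≤ 0 := by linarith
        have h5 : U.im * U.im = 0 := le_antisymm h4 (mul_self_nonneg U.im)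
        have h6 : U.im = 0 := mul_self_eq_zero.mp h5
        rw [h6]; ring
    have hU4 : U^4 = 1 := by
      have hsq : U^2 = ⟨U.re*U.re - U.im*U.im, 0⟩ := by
        ext
        · simp [pow_two, Zsqrtd.re_mul]; ring
        · simp [pow_two, Zsqrtd.im_mul]; linarith [h0]
      have h42 : U^4 = (U^2)^2 := by ring
      rw [h42, hsq]
      ext
      · simp [pow_two, Zsqrtd.re_mul]
        nlinarith [h1, h0]
      · simp [pow_two, Zsqrtd.im_mul]
    have hupow : ∀ nn : ℕ, U^nn = U^(nn % 4) := by
      intro nn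
      conv_lhs => rw [← Nat.div_add_mod nn 4]
      rw [pow_add, pow_mul, hU4, one_pow, one_mul]
    obtain ⟨g, hg⟩ : ∃ g : ℤi, g^v = U := by
      have h4mod : v % 4 = 1 ∨ v % 4 = 3 := by omega
      rcases h4mod with h4|h4
      · exact ⟨U, by rw [hupow v, h4, pow_one]⟩
      · refine ⟨U^3, ?_⟩
        rw [← pow_mul, hupow (3*v)]
        have h34 : 3*v % 4 = 1 := by omega
        rw [h34, pow_one]
    have hw : (d*g)^v = z1 := by rw [mul_pow, hg]; exact hu
    set w := d*g with hwdef
    have hstar : (star w)^v = star z1 := by rw [← star_pow, hw]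
    have hdvd : (w - star w) ∣ (z1 - star z1) := by
      rw [← hstar, ← hw]
      exact sub_dvd_pow_sub_pow w (star w) v
    have hnd : (w - star w).norm ∣ (z1 - star z1).norm := by
      obtain ⟨q, hq⟩ := hdvd
      exact ⟨q.norm, by rw [hq, Zsqrtd.norm_mul]⟩
    have hn1 : (w - star w).norm = 4*(w.im*w.im) := by
      rw [Zsqrtd.norm_def]
      simp [Zsqrtd.re_sub, Zsqrtd.im_sub, Zsqrtd.re_star, Zsqrtd.im_star]
      ring
    have hn2 : (z1 - star z1).norm = 4 := by
      rw [Zsqrtd.norm_def]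
      simp [hz1, Zsqrtd.re_sub, Zsqrtd.im_sub, Zsqrtd.re_star, Zsqrtd.im_star]
    rw [hn1, hn2] at hnd
    have ht : w.im = 1 ∨ w.im = -1 := by
      obtain ⟨k, hk⟩ := hnd
      have hk1 : w.im * (w.im * k) = 1 := by linarith
      exact Int.isUnit_iff.mp ((⟨⟨w.im, w.im*k, hk1, by rw [mul_comm]; exact hk1⟩, rfl⟩ : IsUnit w.im))
    obtain ⟨S, ε, hε, hSv⟩ : ∃ S ε, (ε = 1 ∨ ε = -1) ∧ ((⟨S, 1⟩ : ℤi))^v = ⟨(a:ℤ), ε⟩ := by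
      rcases ht with h'|h'
      · refine ⟨w.re, 1, Or.inl rfl, ?_⟩
        have hww : (⟨w.re, 1⟩ : ℤi) = w := by
          ext
          · rfl
          · exact h'.symm
        rw [hww]; exact hw
      · refine ⟨w.re, -1, Or.inr rfl, ?_⟩
        have hww : (⟨w.re, 1⟩ : ℤi) = star w := by
          ext <;> simp [Zsqrtd.re_star, Zsqrtd.im_star, h']
        rw [hww, hstar, hz1]
        ext <;> simp [Zsqrtd.re_star, Zsqrtd.im_star]
    have hnormpow : ∀ (z : ℤi) (k : ℕ), (z^k).norm = z.norm^k := by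
      intro z k
      induction k with
      | zero => simp [Zsqrtd.norm_def]
      | succ k ih => rw [pow_succ, pow_succ, Zsqrtd.norm_mul, ih]
    have hnormv : (S*S + 1)^v = (a:ℤ)*(a:ℤ) + 1 := by
      have hSnorm : Zsqrtd.norm (⟨S,1⟩ : ℤi) = S*S+1 := by rw [Zsqrtd.norm_def]; ring
      have haε : Zsqrtd.norm (⟨(a:ℤ),ε⟩ : ℤi) = (a:ℤ)*(a:ℤ)+1 := by
        rw [Zsqrtd.norm_def]
        rcases hε with rfl|rfl <;> ring
      have hc := congrArg Zsqrtd.norm hSv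
      rw [hnormpow, hSnorm, haε] at hc
      exact hc
    have hS0 : S ≠ 0 := by
      rintro rfl
      rw [show ((0:ℤ)*0+1) = 1 by norm_num, one_pow] at hnormv
      have h1a : (1:ℤ) ≤ (a:ℤ) := by exact_mod_cast ha
      nlinarith
    have hSe : (2:ℤ) ∣ S := by
      rcases Int.even_or_odd S with h'|h'
      · obtain ⟨k, hk⟩ := h'
        exact ⟨k, by rw [hk]; ring⟩
      · exfalso
        obtain ⟨k, hk⟩ := h'
        have hd1 : (2:ℤ) ∣ (S*S+1) := ⟨2*k*k + 2*k + 1, by rw [hk]; ring⟩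
        have hd2 : (2:ℤ) ∣ (S*S+1)^v := dvd_pow hd1 (by omega)
        rw [hnormv] at hd2
        have habZ : (a:ℤ) = 2*(b:ℤ) := by exact_mod_cast hab
        have hd3 : (2:ℤ) ∣ 4*((b:ℤ)*(b:ℤ)) := ⟨2*((b:ℤ)*(b:ℤ)), by ring⟩
        have hd4 : (2:ℤ) ∣ 1 := by
          have he : (a:ℤ)*(a:ℤ) + 1 - 4*((b:ℤ)*(b:ℤ)) = 1 := by rw [habZ]; ring
          calc (2:ℤ) ∣ ((a:ℤ)*(a:ℤ) + 1 - 4*((b:ℤ)*(b:ℤ))) := dvd_sub hd2 hd3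
          _ = 1 := he
        norm_num at hd4
    have him : ((⟨S,1⟩ : ℤi)^v).im = ε := by rw [hSv]
    rw [hmv] at him
    exact key S hS0 hSe m hm1 ε hε him
end
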